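/- arXiv:1607.02846 — 3 statements merged into one kernel-verified Lean document; each statement's English description precedes it below -/
import Mathlib

section
/- Suppose xr solves the time-varying reduced system of the transformed matrix-interpolation form: (Mᵀ Er T) x̂r' = (Mᵀ Ar T - Mᵀ Wᵀ E V̇(t) T - Mᵀ Er Ṫ(t)) x̂r + Mᵀ Br u, where T : ℝ → Matrix r r ℝ is differentiable and invertible. Then xr(t) := (T t).mulVec (x̂r t) satisfies the untransformed reduced system Er ẋr = (Ar - Wᵀ E V̇(t)) xr + Br u (after left-multiplying by (Mᵀ)⁻¹). -/
/-!
By the product rule, `d/dt (T x̂r) = Ṫ x̂r + T x̂r'`. Cancelling the invertible `Mᵀ` from the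
transformed equation expresses `Er T x̂r'`, and its `- Er Ṫ x̂r` term is exactly what the
product rule adds back.
-/

open Matrix

theorem HasDerivAt.matrix_mulVec {𝕜 : Type*} [NontriviallyNormedField 𝕜] {m n : Type*} [Fintype n]
    {A : 𝕜 → Matrix m n 𝕜} {A' : Matrix m n 𝕜} {x : 𝕜 → n → 𝕜} {x' : n → 𝕜} {t : 𝕜}
    (hA : ∀ i j, HasDerivAt (fun s => A s i j) (A' i j) t) (hx : HasDerivAt x x' t) :
    HasDerivAt (fun s => A s *ᵥ x s) (A' *ᵥ x t + A t *ᵥ x') t :=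
  hasDerivAt_pi.2 fun i => by
    simpa only [mulVec, dotProduct, Pi.add_apply, Finset.sum_add_distrib] using
      HasDerivAt.fun_sum fun j _ => (hA i j).fun_mul (hasDerivAt_pi.1 hx j)

theorem back_transformation_time_varying_general {n m r : ℕ}
    (E : Matrix (Fin n) (Fin n) ℝ) (W : Matrix (Fin n) (Fin r) ℝ)
    (Vdot : ℝ → Matrix (Fin n) (Fin r) ℝ)
    (Ar : Matrix (Fin r) (Fin r) ℝ) (Br : Matrix (Fin r) (Fin m) ℝ)
    (M : Matrix (Fin r) (Fin r) ℝ) (hM : IsUnit M)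
    (T : ℝ → Matrix (Fin r) (Fin r) ℝ)
    (hT : ∀ i j, Differentiable ℝ (fun s => T s i j))
    (u : ℝ → Fin m → ℝ) (xhat : ℝ → Fin r → ℝ) (hxhat : Differentiable ℝ xhat)
    (Er : Matrix (Fin r) (Fin r) ℝ)
    (hred : ∀ t, (Mᵀ * Er * T t).mulVec (deriv xhat t) =
      (Mᵀ * Ar * T t - Mᵀ * Wᵀ * E * Vdot t * T t
        - Mᵀ * Er * (Matrix.of fun i j => deriv (fun s => T s i j) t)).mulVec (xhat t)
      + (Mᵀ * Br).mulVec (u t)) :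
    ∀ t, Er.mulVec (deriv (fun s => (T s).mulVec (xhat s)) t) =
      (Ar - Wᵀ * E * Vdot t).mulVec ((T t).mulVec (xhat t)) + Br.mulVec (u t) := by
  intro t
  set Tdot : Matrix (Fin r) (Fin r) ℝ := Matrix.of fun i j => deriv (fun s => T s i j) t
  have hprod : HasDerivAt (fun s => T s *ᵥ xhat s) (Tdot *ᵥ xhat t + T t *ᵥ deriv xhat t) t :=
    .matrix_mulVec (fun i j => (hT i j t).hasDerivAt) (hxhat t).hasDerivAt
  have hreduced : Er *ᵥ (T t *ᵥ deriv xhat t) = Ar *ᵥ (T t *ᵥ xhat t)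
      - (Wᵀ * E * Vdot t) *ᵥ (T t *ᵥ xhat t) - Er *ᵥ (Tdot *ᵥ xhat t) + Br *ᵥ u t := by
    apply mulVec_injective_of_isUnit (M.isUnit_transpose.2 hM)
    simpa only [mulVec_mulVec, sub_mulVec, add_mulVec, mulVec_sub, mulVec_add, Matrix.mul_assoc]
      using hred t
  rw [hprod.deriv, mulVec_add, hreduced, sub_mulVec]
  abel

/-- Back-transformation of the time-varying transformed reduced system: if x̂r
solves (Mᵀ Er T) x̂r' = (Mᵀ Ar T - Mᵀ Wᵀ E V̇(t) T - Mᵀ Er Ṫ(t)) x̂r + Mᵀ Br u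
with T(t) differentiable and invertible, then xr := T x̂r solves the
untransformed reduced system Er ẋr = (Ar - Wᵀ E V̇(t)) xr + Br u. -/
theorem back_transformation_time_varying {n m r : ℕ}
    (E : Matrix (Fin n) (Fin n) ℝ) (W V : Matrix (Fin n) (Fin r) ℝ)
    (Vdot : ℝ → Matrix (Fin n) (Fin r) ℝ)
    (Ar : Matrix (Fin r) (Fin r) ℝ) (Br : Matrix (Fin r) (Fin m) ℝ)
    (M : Matrix (Fin r) (Fin r) ℝ) (hM : IsUnit M)
    (T : ℝ → Matrix (Fin r) (Fin r) ℝ)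
    (hT : ∀ i j, Differentiable ℝ (fun s => T s i j))
    (hTinv : ∀ t, IsUnit (T t))
    (u : ℝ → Fin m → ℝ) (xhat : ℝ → Fin r → ℝ) (hxhat : Differentiable ℝ xhat)
    (Er : Matrix (Fin r) (Fin r) ℝ) (hEr : Er = Wᵀ * E * V)
    (hred : ∀ t, (Mᵀ * Er * T t).mulVec (deriv xhat t) =
      (Mᵀ * Ar * T t - Mᵀ * Wᵀ * E * Vdot t * T t
        - Mᵀ * Er * (Matrix.of fun i j => deriv (fun s => T s i j) t)).mulVec (xhat t)
      + (Mᵀ * Br).mulVec (u t)) :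
    ∀ t, Er.mulVec (deriv (fun s => (T s).mulVec (xhat s)) t) =
      (Ar - Wᵀ * E * Vdot t).mulVec ((T t).mulVec (xhat t)) + Br.mulVec (u t) :=
  back_transformation_time_varying_general E W Vdot Ar Br M hM T hT u xhat hxhat Er hred
end

section
/- One-moment matching for one-sided Galerkin reduction: let A, E be n×n with A invertible, b ∈ ℝⁿ, c ∈ ℝⁿ, and let V be an n×r matrix with orthonormal columns whose span contains A⁻¹b. Assume Vᵀ A V is invertible. Then the zeroth moment matches: cᵀ A⁻¹ b = (cᵀ V) (Vᵀ A V)⁻¹ (Vᵀ b). -/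
open Matrix

/-- Zeroth moment matching for one-sided Galerkin reduction at s₀ = 0: if the
span of the orthonormal columns of V contains A⁻¹b and VᵀAV is invertible, then
cᵀ A⁻¹ b = (cᵀV)(VᵀAV)⁻¹(Vᵀb). -/
theorem moment_matching_zeroth {n r : ℕ}
    (A E : Matrix (Fin n) (Fin n) ℝ) (hA : IsUnit A)
    (b c : Fin n → ℝ) (V : Matrix (Fin n) (Fin r) ℝ)
    (hV : Vᵀ * V = 1)
    (hspan : ∃ z : Fin r → ℝ, A⁻¹.mulVec b = V.mulVec z)
    (hAr : IsUnit (Vᵀ * A * V)) :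
    c ⬝ᵥ A⁻¹.mulVec b =
      Vᵀ.mulVec c ⬝ᵥ (Vᵀ * A * V)⁻¹.mulVec (Vᵀ.mulVec b) := by
  obtain ⟨z, hz⟩ := hspan
  have hb : b = (A * V).mulVec z := by
    have := congrArg A.mulVec hz
    simpa [Matrix.mulVec_mulVec, Matrix.mul_nonsing_inv A
      ((Matrix.isUnit_iff_isUnit_det A).mp hA)] using this
  have hVb : Vᵀ.mulVec b = (Vᵀ * A * V).mulVec z := by
    rw [hb, Matrix.mulVec_mulVec, ← Matrix.mul_assoc]
  have hinv : (Vᵀ * A * V)⁻¹.mulVec (Vᵀ.mulVec b) = z := by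
    rw [hVb, Matrix.mulVec_mulVec, Matrix.nonsing_inv_mul _
      ((Matrix.isUnit_iff_isUnit_det _).mp hAr), Matrix.one_mulVec]
  rw [hinv, hz, Matrix.dotProduct_mulVec, Matrix.mulVec_transpose]
end

section
/- Stability preservation under one-sided reduction: if A + Aᵀ is negative definite and E is symmetric positive definite, and V has full column rank, then for Er := VᵀEV and Ar := VᵀAV, the matrix Ar + Arᵀ is negative definite and Er is positive definite; consequently every eigenvalue λ of the pencil (Ar, Er) (i.e. Ar v = λ Er v, v ≠ 0) has negative real part. -/
/-!
Congruence by a matrix with trivial kernel preserves positive definiteness, and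
`Vᵀ (A + Aᵀ) V = Ar + Arᵀ`, which gives the first two claims. For an eigenpair
`Ar v = λ Er v`, pairing with `v` gives `v* Ar v = λ (v* Er v)` with `v* Er v > 0`, while
`2 Re (v* Ar v) = v* (Ar + Arᵀ) v < 0`; both definiteness statements transfer to complex
vectors `v = x + i y` because `Re (v* M v) = xᵀ M x + yᵀ M y` for real `M`.
-/

open Matrix ComplexOrder

namespace Matrix

variable {n : Type*} [Fintype n]

theorem re_star_dotProduct_map_ofReal_mulVec (M : Matrix n n ℝ) (v : n → ℂ) :
    (star v ⬝ᵥ M.map Complex.ofReal *ᵥ v).re =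
      (fun i ↦ (v i).re) ⬝ᵥ M *ᵥ (fun i ↦ (v i).re) +
        (fun i ↦ (v i).im) ⬝ᵥ M *ᵥ (fun i ↦ (v i).im) := by
  simp only [dotProduct, mulVec, map_apply, Pi.star_apply, Finset.mul_sum, Complex.re_sum,
    ← Finset.sum_add_distrib]
  refine Finset.sum_congr rfl fun i _ ↦ Finset.sum_congr rfl fun j _ ↦ ?_
  simp [Complex.mul_re, Complex.mul_im]

theorem PosDef.map_ofReal {M : Matrix n n ℝ} (hM : M.PosDef) :
    (M.map Complex.ofReal).PosDef := by
  have hherm : (M.map Complex.ofReal).IsHermitian := hM.1.map _ fun x ↦ by simp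
  refine .of_dotProduct_mulVec_pos hherm fun v hv ↦ ?_
  refine Complex.pos_iff.2 ⟨?_, (hherm.im_star_dotProduct_mulVec_self v).symm⟩
  have hpart : (fun i ↦ (v i).re) ≠ 0 ∨ (fun i ↦ (v i).im) ≠ 0 := by
    by_contra! h
    exact hv (funext fun i ↦ Complex.ext (congrFun h.1 i) (congrFun h.2 i))
  have hpos {x : n → ℝ} (hx : x ≠ 0) : 0 < x ⬝ᵥ M *ᵥ x := by
    simpa using hM.dotProduct_mulVec_pos hx
  have hnonneg (x : n → ℝ) : 0 ≤ x ⬝ᵥ M *ᵥ x := by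
    simpa using hM.posSemidef.dotProduct_mulVec_nonneg x
  rw [re_star_dotProduct_map_ofReal_mulVec]
  rcases hpart with h | h
  · exact add_pos_of_pos_of_nonneg (hpos h) (hnonneg _)
  · exact add_pos_of_nonneg_of_pos (hnonneg _) (hpos h)

theorem star_dotProduct_conjTranspose_mulVec {𝕜 : Type*} [RCLike 𝕜] (A : Matrix n n 𝕜)
    (v : n → 𝕜) :
    star v ⬝ᵥ Aᴴ *ᵥ v = star (star v ⬝ᵥ A *ᵥ v) := by
  rw [star_dotProduct, star_mulVec, conjTranspose_conjTranspose, dotProduct_mulVec]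

theorem re_lt_zero_of_mulVec_eq_smul_mulVec {𝕜 : Type*} [RCLike 𝕜] {A E : Matrix n n 𝕜}
    (hE : E.PosDef) (hA : (-(A + Aᴴ)).PosDef) {lam : 𝕜} {v : n → 𝕜} (hv : v ≠ 0)
    (hlam : A *ᵥ v = lam • E *ᵥ v) : RCLike.re lam < 0 := by
  have hpair : star v ⬝ᵥ A *ᵥ v = lam * (star v ⬝ᵥ E *ᵥ v) := by
    rw [hlam, dotProduct_smul, smul_eq_mul]
  have hE_real := hE.1.im_star_dotProduct_mulVec_self v
  have hE_pos := hE.re_dotProduct_pos hv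
  have hA_pos := hA.re_dotProduct_pos hv
  rw [neg_mulVec, add_mulVec, dotProduct_neg, dotProduct_add, star_dotProduct_conjTranspose_mulVec,
    map_neg, map_add, RCLike.star_def, RCLike.conj_re, hpair, RCLike.mul_re, hE_real] at hA_pos
  have hprod : RCLike.re lam * RCLike.re (star v ⬝ᵥ E *ᵥ v) < 0 := by linarith
  exact neg_of_mul_neg_left hprod hE_pos.le

end Matrix

/-- Stability preservation under one-sided reduction: if E is symmetric
positive definite, A + Aᵀ is negative definite and V has full column rank,
then Er := VᵀEV is positive definite, Ar + Arᵀ is negative definite (with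
Ar := VᵀAV), and every eigenvalue of the pencil (Ar, Er) has negative real
part. -/
theorem stability_preservation_one_sided {n r : ℕ}
    (E A : Matrix (Fin n) (Fin n) ℝ) (hE : E.PosDef)
    (hA : (-(A + Aᵀ)).PosDef)
    (V : Matrix (Fin n) (Fin r) ℝ)
    (hV : ∀ x : Fin r → ℝ, V.mulVec x = 0 → x = 0) :
    (Vᵀ * E * V).PosDef ∧
    (-(Vᵀ * A * V + (Vᵀ * A * V)ᵀ)).PosDef ∧
    ∀ (lam : ℂ) (v : Fin r → ℂ), v ≠ 0 →
      ((Vᵀ * A * V).map (Complex.ofReal)).mulVec v =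
        lam • ((Vᵀ * E * V).map (Complex.ofReal)).mulVec v →
      lam.re < 0 := by
  have hVinj : Function.Injective V.mulVec := (injective_iff_map_eq_zero V.mulVecLin).2 hV
  have hEr : (Vᵀ * E * V).PosDef := by
    simpa using hE.conjTranspose_mul_mul_same hVinj
  have hAr : (-(Vᵀ * A * V + (Vᵀ * A * V)ᵀ)).PosDef := by
    have hcongr : -(Vᵀ * A * V + (Vᵀ * A * V)ᵀ) = Vᴴ * (-(A + Aᵀ)) * V := by
      simp [transpose_mul, Matrix.mul_add, Matrix.add_mul, Matrix.mul_assoc]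
    rw [hcongr]
    exact hA.conjTranspose_mul_mul_same hVinj
  set ArC := (Vᵀ * A * V).map Complex.ofReal
  have hArC : (-(ArC + ArCᴴ)).PosDef := by
    have hmap : -(ArC + ArCᴴ) = (-(Vᵀ * A * V + (Vᵀ * A * V)ᵀ)).map Complex.ofReal := by
      ext i j
      simp only [ArC, Matrix.neg_apply, Matrix.add_apply, map_apply, conjTranspose_apply,
        transpose_apply, Complex.star_def, Complex.conj_ofReal, Complex.ofReal_add,
        Complex.ofReal_neg]
    rw [hmap]
    exact hAr.map_ofReal
  exact ⟨hEr, hAr, fun lam v hv hlam ↦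
    re_lt_zero_of_mulVec_eq_smul_mulVec hEr.map_ofReal hArC hv hlam⟩
end
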